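/- arXiv:1707.05234 — 2 statements merged into one kernel-verified Lean document; each statement's English description precedes it below -/
import Mathlib

section
/- Let Z^k be an F^k-adapted pure-jump process, let 0 ≤ n ≤ r, and let τ be any F-stopping time with T^k_n ≤ τ ≤ T^k_r a.s. Define Q(τ) := min{ T^k_p : p ≥ 0, T^k_p > τ } and η(τ) := Σ_{ℓ=n}^{r+1} T^k_{ℓ−1} 1{Q(τ) = T^k_ℓ}. Then Q(τ) is an F-stopping time, P{η(τ) = T^k_{n−1}} = 0 (so η(τ) takes values in {T^k_n, …, T^k_r} a.s.), and Z^k(τ ∧ T) = Z^k(η(τ) ∧ T) almost surely. -/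
/-!
Off a null set every coordinate path is continuous and leaves each `ε`-ball around its current
value (second Borel–Cantelli on the unit increments). Along such paths the hitting times
`T^{k,j}_m` strictly increase to `∞`, so the merged times `T^k_p` enumerate them, `τ` falls into
a unique `[T^k_ℓ, T^k_{ℓ+1})` with `n ≤ ℓ ≤ r`, `Q(τ) = T^k_{ℓ+1}`, `η(τ) = T^k_ℓ`, and a
pure-jump process is constant on that interval. Finally `Q(τ) ≤ t` iff some hitting time lies in
`(τ, t]`, and every hitting time is a stopping time of the augmented filtration, because
`{T_{m+1} ≤ s}` agrees a.s. with an event built from `{T_m ≤ q}`, `q ≤ s`, and rational samples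
of the path.
-/

open MeasureTheory ProbabilityTheory Filter Set
open scoped ENNReal NNReal Topology Classical

noncomputable section

variable {Ω : Type} [MeasurableSpace Ω]

/-- One-dimensional standard Brownian motion: measurable in space, starting at `0`,
with a.s. continuous paths, Gaussian increments of variance `t - s`, and independent
increments. -/
structure IsBM (P : Measure Ω) (B : ℝ → Ω → ℝ) : Prop where
  meas : ∀ t, Measurable (B t)
  start : ∀ᵐ ω ∂P, B 0 ω = 0
  cont : ∀ᵐ ω ∂P, Continuous fun t => B t ω
  gauss : ∀ s t : ℝ, 0 ≤ s → s ≤ t →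
    P.map (fun ω => B t ω - B s ω) = gaussianReal 0 ((t - s).toNNReal)
  indep : ∀ u : ℕ → ℝ, Monotone u → (∀ i, 0 ≤ u i) →
    iIndepFun (fun i ω => B (u (i + 1)) ω - B (u i) ω) P

/-- The hitting times `T^k_n`: `T^k_0 = 0` and
`T^k_{n+1} = inf {t > T^k_n : |B(t) - B(T^k_n)| = ε}`. -/
def hitT (B : ℝ → Ω → ℝ) (ε : ℝ) : ℕ → Ω → ℝ
  | 0 => fun _ => 0
  | n + 1 => fun ω =>
      sInf {t : ℝ | hitT B ε n ω < t ∧ |B t ω - B (hitT B ε n ω) ω| = ε}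

/-- The sign `σ^k_n` of the `n`-th increment of `B` along the hitting times. -/
def wSign (B : ℝ → Ω → ℝ) (ε : ℝ) (n : ℕ) (ω : Ω) : ℝ :=
  if 0 < B (hitT B ε n ω) ω - B (hitT B ε (n - 1) ω) ω then 1 else -1

/-- The continuous-time random walk `A^k(t) = Σ_{n ≥ 1} ε σ^k_n 1{T^k_n ≤ t}`. -/
def walk (B : ℝ → Ω → ℝ) (ε : ℝ) (t : ℝ) (ω : Ω) : ℝ :=
  ∑' n : ℕ, if hitT B ε (n + 1) ω ≤ t then ε * wSign B ε (n + 1) ω else 0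

/-- A `d`-dimensional Brownian motion: independent one-dimensional coordinates. -/
structure IsBMd {d : ℕ} (P : Measure Ω) (B : Fin d → ℝ → Ω → ℝ) : Prop where
  coord : ∀ j, IsBM P (B j)
  indepCoord : iIndepFun
    (fun (j : Fin d) (ω : Ω) => fun t => B j t ω) P

/-- The increasing rearrangement `T^k_n` of the family of coordinatewise hitting times
`{T^{k,j}_m : m ≥ 1, 1 ≤ j ≤ d}`, with `T^k_0 = 0`. -/
def merged {d : ℕ} (Tj : Fin d → ℕ → Ω → ℝ) : ℕ → Ω → ℝ
  | 0 => fun _ => 0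
  | n + 1 => fun ω =>
      sInf {t : ℝ | merged Tj n ω < t ∧ ∃ j : Fin d, ∃ m : ℕ, 1 ≤ m ∧ Tj j m ω = t}

/-- The merged hitting times `T^k_n` of a `d`-dimensional Brownian motion. -/
def mT {d : ℕ} (B : Fin d → ℝ → Ω → ℝ) (ε : ℝ) : ℕ → Ω → ℝ :=
  merged fun j => hitT (B j) ε

/-- The number of steps `e(k,T) = d⌈ε_k^{-2} T⌉`. -/
def nSteps (d : ℕ) (ε T : ℝ) : ℕ := d * ⌈T / ε ^ 2⌉₊

/-- The natural filtration of a real-valued process. -/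
def natFilt (A : ℝ → Ω → ℝ) (t : ℝ) : MeasurableSpace Ω :=
  ⨆ s ∈ Iic t, MeasurableSpace.comap (A s) inferInstance

/-- The product filtration `F^k_t` generated by the coordinate random walks `A^{k,j}`. -/
def walkFilt {d : ℕ} (B : Fin d → ℝ → Ω → ℝ) (ε : ℝ) (t : ℝ) : MeasurableSpace Ω :=
  ⨆ j : Fin d, natFilt (walk (B j) ε) t

/-- `τ` is a stopping time for the filtration `F`. -/
def IsStopTime (F : ℝ → MeasurableSpace Ω) (τ : Ω → ℝ) : Prop :=
  ∀ t : ℝ, MeasurableSet[F t] {ω | τ ω ≤ t}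

/-- The σ-algebra `F_τ` of a stopping time `τ` for the filtration `F`. -/
def stopσ (F : ℝ → MeasurableSpace Ω) (τ : Ω → ℝ) : MeasurableSpace Ω :=
  MeasurableSpace.generateFrom
    {A : Set Ω | ∀ t : ℝ, MeasurableSet[F t] (A ∩ {ω | τ ω ≤ t})}

/-- The σ-algebra generated by the `P`-null sets. -/
def nullσ (P : Measure Ω) : MeasurableSpace Ω :=
  MeasurableSpace.generateFrom {A : Set Ω | P A = 0}

/-- The usual `P`-augmentation `(F_t)` of the natural filtration of the Brownian motion. -/
def augFilt {d : ℕ} (P : Measure Ω) (B : Fin d → ℝ → Ω → ℝ) (t : ℝ) :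
    MeasurableSpace Ω :=
  (⨆ j : Fin d, natFilt (B j) t) ⊔ nullσ P

/-- The set of F-stopping times with values in `[0,T]`, i.e. `𝒯_0(F)`. -/
def brownianStopTimes {d : ℕ} (P : Measure Ω) (B : Fin d → ℝ → Ω → ℝ) (T : ℝ) :
    Set (Ω → ℝ) :=
  {τ | IsStopTime (augFilt P B) τ ∧ ∀ ω, τ ω ∈ Icc (0 : ℝ) T}

/-- Membership in `D^k_{0,T}`: stopping times of the form `η ∧ T` where `η` is an
`F^k`-stopping time taking values in `{T^k_0, T^k_1, …}`. -/
def memDk {d : ℕ} (B : Fin d → ℝ → Ω → ℝ) (ε T : ℝ) (τ : Ω → ℝ) : Prop :=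
  ∃ η : Ω → ℝ, IsStopTime (walkFilt B ε) η ∧ (∀ ω, ∃ i : ℕ, η ω = mT B ε i ω) ∧
    τ = fun ω => min (η ω) T

/-- `Z^k` is an `F^k`-adapted pure-jump process along the times `T^k_n`. -/
def IsPureJump {d : ℕ} (B : Fin d → ℝ → Ω → ℝ) (ε : ℝ) (Zk : ℝ → Ω → ℝ) : Prop :=
  (∀ t : ℝ, 0 ≤ t → Measurable[walkFilt B ε t] (Zk t)) ∧
    ∀ ω, ∀ t : ℝ, ∀ n : ℕ, mT B ε n ω ≤ t → t < mT B ε (n + 1) ω →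
      Zk t ω = Zk (mT B ε n ω) ω

/-- The backward dynamic-programming recursion, written as a recursion on the number of
remaining steps: `snellAux … 0 = g N` and
`snellAux … (m+1) = max (g (N-(m+1))) E[snellAux … m | 𝒢 (N-(m+1))]`. -/
def snellAux (P : Measure Ω) (G : ℕ → MeasurableSpace Ω) (g : ℕ → Ω → ℝ) (N : ℕ) :
    ℕ → Ω → ℝ
  | 0 => g N
  | m + 1 => fun ω =>
      max (g (N - (m + 1)) ω) ((P[snellAux P G g N m | G (N - (m + 1))]) ω)

/-- The value process `V_n` of the backward dynamic-programming recursion: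
`V_N = g N` and `V_n = max (g n) E[V_{n+1} | 𝒢 n]` for `n < N`. -/
def snell (P : Measure Ω) (G : ℕ → MeasurableSpace Ω) (g : ℕ → Ω → ℝ) (N n : ℕ) :
    Ω → ℝ :=
  snellAux P G g N (N - n)

/-- The discrete σ-algebras `F^k_{T^k_n}`. -/
def Gn {d : ℕ} (B : Fin d → ℝ → Ω → ℝ) (ε : ℝ) (n : ℕ) : MeasurableSpace Ω :=
  stopσ (walkFilt B ε) (mT B ε n)

/-- The optimal stopping index `τ^k_n = min{n ≤ j ≤ N : V_j = g j}`. -/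
def stopIdx (V g : ℕ → Ω → ℝ) (n N : ℕ) (ω : Ω) : ℕ :=
  sInf {j : ℕ | n ≤ j ∧ j ≤ N ∧ V j ω = g j ω}

/-- `Q(τ) = min{T^k_p : T^k_p > τ}`, the first merged hitting time strictly after `τ`. -/
def Qtime {d : ℕ} (B : Fin d → ℝ → Ω → ℝ) (ε : ℝ) (τ : Ω → ℝ) (ω : Ω) : ℝ :=
  sInf {t : ℝ | (∃ p : ℕ, mT B ε p ω = t) ∧ τ ω < t}

/-- `η(τ) = Σ_{ℓ=n}^{r+1} T^k_{ℓ−1} 1{Q(τ) = T^k_ℓ}`. -/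
def etaTime {d : ℕ} (B : Fin d → ℝ → Ω → ℝ) (ε : ℝ) (τ : Ω → ℝ) (n r : ℕ) (ω : Ω) :
    ℝ :=
  ∑ ℓ ∈ Finset.Icc n (r + 1),
    if Qtime B ε τ ω = mT B ε ℓ ω then mT B ε (ℓ - 1) ω else 0

section Filtrations

lemma augFilt_mono {d : ℕ} (P : Measure Ω) (B : Fin d → ℝ → Ω → ℝ) : Monotone (augFilt P B) :=
  fun _ _ hst => sup_le_sup_right
    (iSup_mono fun _ => biSup_mono fun _ hu => le_trans hu hst) _

variable {d : ℕ} {P : Measure Ω} {B : Fin d → ℝ → Ω → ℝ}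

lemma measurable_augFilt {s t : ℝ} (hst : s ≤ t) (j : Fin d) :
    Measurable[augFilt P B t] (B j s) :=
  measurable_iff_comap_le.2 <| le_sup_of_le_left <| le_iSup_of_le j <|
    le_biSup (fun s => MeasurableSpace.comap (B j s) inferInstance) hst

lemma measurableSet_augFilt_of_ae_eq {t : ℝ} {S A : Set Ω}
    (hS : MeasurableSet[augFilt P B t] S) (hSA : S =ᵐ[P] A) :
    MeasurableSet[augFilt P B t] A := by
  have hnull : ∀ {N : Set Ω}, P N = 0 → MeasurableSet[augFilt P B t] N :=
    fun hN => le_sup_right (a := ⨆ j, natFilt (B j) t) _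
      (MeasurableSpace.measurableSet_generateFrom hN)
  obtain ⟨hSA, hAS⟩ := ae_eq_set.1 hSA
  have hA : A = (S \ (S \ A)) ∪ (A \ S) := by
    ext ω; by_cases hω : ω ∈ S <;> simp [hω]
  rw [hA]
  exact (hS.diff (hnull hSA)).union (hnull hAS)

end Filtrations

namespace IsStopTime

variable {α : Type} {F : ℝ → MeasurableSpace α} {τ σ : α → ℝ}

lemma measurableSet_lt (hF : Monotone F) (hτ : IsStopTime F τ) (t : ℝ) :
    MeasurableSet[F t] {ω | τ ω < t} := by
  have h : {ω | τ ω < t} = ⋃ (q : ℚ) (_ : (q : ℝ) < t), {ω | τ ω ≤ q} := by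
    ext ω
    simp only [mem_ofPred_eq, mem_iUnion, exists_prop]
    refine ⟨fun hτt => ?_, fun ⟨q, hqt, hτq⟩ => hτq.trans_lt hqt⟩
    obtain ⟨q, hτq, hqt⟩ := exists_rat_btwn hτt
    exact ⟨q, hqt, hτq.le⟩
  rw [h]
  exact .iUnion fun q => .iUnion fun hqt => hF hqt.le _ (hτ q)

lemma measurableSet_lt_and_le (hF : Monotone F) (hτ : IsStopTime F τ) (hσ : IsStopTime F σ)
    (t : ℝ) : MeasurableSet[F t] {ω | τ ω < σ ω ∧ σ ω ≤ t} := by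
  have h : {ω | τ ω < σ ω ∧ σ ω ≤ t} =
      ⋃ (q : ℚ) (_ : (q : ℝ) ≤ t), {ω | τ ω < q} ∩ {ω | σ ω < q}ᶜ ∩ {ω | σ ω ≤ t} := by
    ext ω
    simp only [mem_ofPred_eq, mem_iUnion, mem_inter_iff, mem_compl_iff, not_lt, exists_prop]
    refine ⟨fun ⟨hτσ, hσt⟩ => ?_, fun ⟨q, _, ⟨hτq, hqσ⟩, hσt⟩ => ⟨hτq.trans_le hqσ, hσt⟩⟩
    obtain ⟨q, hτq, hqσ⟩ := exists_rat_btwn hτσ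
    exact ⟨q, hqσ.le.trans hσt, ⟨hτq, hqσ.le⟩, hσt⟩
  rw [h]
  exact .iUnion fun q => .iUnion fun hqt =>
    ((hF hqt _ (hτ.measurableSet_lt hF q)).inter (hF hqt _ (hσ.measurableSet_lt hF q)).compl).inter
      (hσ t)

end IsStopTime

section Paths

lemma Filter.Eventually.exists_rat_gt {p : ℝ → Prop} {a : ℝ} (h : ∀ᶠ x in 𝓝[>] a, p x) :
    ∃ q : ℚ, a < q ∧ p q := by
  obtain ⟨b, hab, hsub⟩ := mem_nhdsGT_iff_exists_Ioo_subset.1 h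
  obtain ⟨q, haq, hqb⟩ := exists_rat_btwn (mem_Ioi.1 hab)
  exact ⟨q, haq, hsub ⟨haq, hqb⟩⟩

lemma Filter.Eventually.exists_rat_lt {p : ℝ → Prop} {a : ℝ} (h : ∀ᶠ x in 𝓝[<] a, p x) :
    ∃ q : ℚ, (q : ℝ) < a ∧ p q := by
  obtain ⟨b, hba, hsub⟩ := mem_nhdsLT_iff_exists_Ioo_subset.1 h
  obtain ⟨q, hbq, hqa⟩ := exists_rat_btwn (mem_Iio.1 hba)
  exact ⟨q, hqa, hsub ⟨hbq, hqa⟩⟩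

variable {f : ℝ → ℝ} {ε h s : ℝ}

/-- Sampling at rational times, which turns `{T_{m+1} ≤ s}` into a countable combination of
events `{T_m ≤ q}` and increments of the path. -/
lemma exists_le_abs_sub_iff_forall_rat (hf : Continuous f) (hε : 0 < ε) :
    (∃ u ∈ Icc h s, ε ≤ |f u - f h|) ↔ ∀ δ : ℚ, 0 < δ → ∃ q : ℚ, (h ≤ q ∧ q - δ < h) ∧
      ∃ q' : ℚ, ((q : ℝ) < q' ∧ (q' : ℝ) ≤ s) ∧ ε - δ ≤ |f q' - f q| := by
  constructor
  · rintro ⟨u, ⟨hhu, hus⟩, hεu⟩ δ hδ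
    have hδ' : (0 : ℝ) < δ := by exact_mod_cast hδ
    have hhu : h < u := hhu.lt_of_ne fun e => by simp [e] at hεu; linarith
    have near : ∀ a, ∀ᶠ x in 𝓝 a, |f x - f a| < δ / 2 := fun a => by
      simpa only [Real.dist_eq] using Metric.tendsto_nhds.1 (hf.tendsto a) _ (half_pos hδ')
    have hright : ∀ᶠ x in 𝓝[>] h, x ∈ Ioo h (min u (h + δ)) :=
      Ioo_mem_nhdsGT (lt_min hhu (lt_add_of_pos_right h hδ'))
    obtain ⟨q, hhq, hq, hfq⟩ := (hright.and (nhdsWithin_le_nhds (near h))).exists_rat_gt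
    have hleft : ∀ᶠ x in 𝓝[<] u, x ∈ Ioo (q : ℝ) u :=
      Ioo_mem_nhdsLT (hq.2.trans_le (min_le_left _ _))
    obtain ⟨q', hq'u, hqq', hfq'⟩ := (hleft.and (nhdsWithin_le_nhds (near u))).exists_rat_lt
    refine ⟨q, ⟨hhq.le, by linarith [hq.2.trans_le (min_le_right _ _)]⟩,
      q', ⟨hqq'.1, hq'u.le.trans hus⟩, ?_⟩
    have := abs_sub_le (f u) (f q') (f h)
    have := abs_sub_le (f q') (f q) (f h)
    linarith [abs_sub_comm (f u) (f q')]
  · intro hrat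
    obtain ⟨q, ⟨hhq, -⟩, q', ⟨hqq', hq's⟩, -⟩ := hrat 1 one_pos
    have hhs : h ≤ s := hhq.trans (hqq'.le.trans hq's)
    have hgc : Continuous fun u => |f u - f h| := (hf.sub continuous_const).abs
    obtain ⟨v, hv, hmax⟩ := isCompact_Icc.exists_isMaxOn (nonempty_Icc.2 hhs) hgc.continuousOn
    refine ⟨v, hv, not_lt.1 fun hvε => ?_⟩
    set M := |f v - f h|
    obtain ⟨γ, hγ, hnear⟩ := Metric.eventually_nhds_iff.1 <|
      Metric.tendsto_nhds.1 (hf.tendsto h) _ (half_pos (sub_pos.2 hvε))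
    obtain ⟨δ, hδ, hδγ⟩ := exists_rat_btwn (lt_min hγ (half_pos (sub_pos.2 hvε)))
    obtain ⟨q, ⟨hhq, hqδ⟩, q', ⟨hqq', hq's⟩, hinc⟩ := hrat δ (by exact_mod_cast hδ)
    have hq : |f q - f h| < (ε - M) / 2 := by
      rw [← Real.dist_eq]
      refine hnear ?_
      rw [Real.dist_eq, abs_of_nonneg (sub_nonneg.2 hhq)]
      linarith [min_le_left γ ((ε - M) / 2)]
    have hq' : |f q' - f h| ≤ M :=
      hmax ⟨hhq.trans hqq'.le, hq's⟩
    have := abs_sub_le (f q') (f h) (f q)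
    linarith [abs_sub_comm (f h) (f q), min_le_right γ ((ε - M) / 2)]

lemma exists_abs_sub_eq_of_le_abs_sub (hf : Continuous f) (hε : 0 < ε) {u : ℝ}
    (hu : u ∈ Icc h s) (hεu : ε ≤ |f u - f h|) : ∃ w ∈ Ioc h s, |f w - f h| = ε := by
  obtain ⟨w, hw, hfw⟩ := intermediate_value_Icc hu.1 ((hf.sub continuous_const).abs.continuousOn)
    (show ε ∈ Icc |f h - f h| |f u - f h| by simp [hε.le, hεu])
  refine ⟨w, ⟨hw.1.lt_of_ne ?_, hw.2.trans hu.2⟩, hfw⟩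
  rintro rfl
  simp at hfw
  linarith

end Paths

def Oscillates (ε : ℝ) (f : ℝ → ℝ) : Prop :=
  ∀ a, 0 ≤ a → ∃ t, a < t ∧ ε ≤ |f t - f a|

lemma csInf_exit_mem {f : ℝ → ℝ} {ε a : ℝ} (hf : Continuous f) (hε : 0 < ε)
    (hexit : ∃ t, a < t ∧ ε ≤ |f t - f a|) :
    sInf {t | a < t ∧ |f t - f a| = ε} ∈ {t | a < t ∧ |f t - f a| = ε} := by
  obtain ⟨t, hat, hεt⟩ := hexit
  obtain ⟨w, hw, hfw⟩ := exists_abs_sub_eq_of_le_abs_sub hf hε ⟨hat.le, le_rfl⟩ hεt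
  have hbdd : BddBelow {t | a < t ∧ |f t - f a| = ε} := ⟨a, fun _ ht => ht.1.le⟩
  have hcl : IsClosed {t | a ≤ t ∧ |f t - f a| = ε} :=
    (isClosed_le continuous_const continuous_id).inter <|
      isClosed_eq (hf.sub continuous_const).abs continuous_const
  have hsub : {t | a < t ∧ |f t - f a| = ε} ⊆ {t | a ≤ t ∧ |f t - f a| = ε} :=
    fun _ ht => ⟨ht.1.le, ht.2⟩
  obtain ⟨hle, hfc⟩ := hcl.closure_subset_iff.2 hsub (csInf_mem_closure ⟨w, hw.1, hfw⟩ hbdd)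
  refine ⟨hle.lt_of_ne fun e => ?_, hfc⟩
  rw [← e, sub_self, abs_zero] at hfc
  exact hε.ne hfc

section HittingTimes

variable {α : Type} {b : ℝ → α → ℝ} {ε : ℝ} {ω : α}

@[simp] lemma hitT_zero : hitT b ε 0 ω = 0 := rfl

lemma hitT_nonneg : ∀ m, 0 ≤ hitT b ε m ω
  | 0 => le_rfl
  | m + 1 => Real.sInf_nonneg fun _ ht => (hitT_nonneg m).trans ht.1.le

lemma hitT_succ_mem (hc : Continuous fun t => b t ω) (hosc : Oscillates ε fun t => b t ω)
    (hε : 0 < ε) (m : ℕ) :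
    hitT b ε m ω < hitT b ε (m + 1) ω ∧
      |b (hitT b ε (m + 1) ω) ω - b (hitT b ε m ω) ω| = ε :=
  csInf_exit_mem hc hε (hosc _ (hitT_nonneg m))

lemma hitT_strictMono (hc : Continuous fun t => b t ω) (hosc : Oscillates ε fun t => b t ω)
    (hε : 0 < ε) : StrictMono fun m => hitT b ε m ω :=
  strictMono_nat_of_lt_succ fun m => (hitT_succ_mem hc hosc hε m).1

/-- A continuous path cannot make infinitely many `ε`-steps in bounded time. -/
lemma exists_lt_hitT (hc : Continuous fun t => b t ω) (hosc : Oscillates ε fun t => b t ω)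
    (hε : 0 < ε) (M : ℝ) : ∃ m, M < hitT b ε m ω := by
  by_contra! hbdd
  have hlim := tendsto_atTop_ciSup (hitT_strictMono hc hosc hε).monotone ⟨M, by
    rintro _ ⟨m, rfl⟩; exact hbdd m⟩
  have hpath := (hc.tendsto _).comp hlim
  have hstep : Tendsto (fun m => |b (hitT b ε (m + 1) ω) ω - b (hitT b ε m ω) ω|) atTop
      (𝓝 |b (⨆ m, hitT b ε m ω) ω - b (⨆ m, hitT b ε m ω) ω|) :=
    (((tendsto_add_atTop_iff_nat 1).2 hpath).sub hpath).abs
  rw [sub_self, abs_zero] at hstep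
  simp only [(hitT_succ_mem hc hosc hε _).2] at hstep
  exact hε.ne' (tendsto_nhds_unique tendsto_const_nhds hstep)

lemma finite_setOf_hitT_le (hc : Continuous fun t => b t ω)
    (hosc : Oscillates ε fun t => b t ω) (hε : 0 < ε) (M : ℝ) :
    {m | hitT b ε m ω ≤ M}.Finite := by
  obtain ⟨m₀, hm₀⟩ := exists_lt_hitT hc hosc hε M
  refine (finite_Iio m₀).subset fun m (hm : hitT b ε m ω ≤ M) => mem_Iio.2 ?_
  by_contra! h
  exact (hm₀.trans_le ((hitT_strictMono hc hosc hε).monotone h)).not_ge hm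

lemma hitT_succ_le_iff (hc : Continuous fun t => b t ω) (hosc : Oscillates ε fun t => b t ω)
    (hε : 0 < ε) (m : ℕ) (s : ℝ) :
    hitT b ε (m + 1) ω ≤ s ↔
      ∃ u ∈ Icc (hitT b ε m ω) s, ε ≤ |b u ω - b (hitT b ε m ω) ω| := by
  refine ⟨fun hs => ⟨_, ⟨(hitT_succ_mem hc hosc hε m).1.le, hs⟩,
    (hitT_succ_mem hc hosc hε m).2.ge⟩, fun ⟨u, hu, hεu⟩ => ?_⟩
  obtain ⟨w, hw, hbw⟩ := exists_abs_sub_eq_of_le_abs_sub hc hε hu hεu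
  have hbdd : BddBelow {t | hitT b ε m ω < t ∧ |b t ω - b (hitT b ε m ω) ω| = ε} :=
    ⟨hitT b ε m ω, fun _ ht => ht.1.le⟩
  exact (csInf_le hbdd ⟨hw.1, hbw⟩).trans hw.2

end HittingTimes

section Merged

variable {α : Type} {d : ℕ} {Tj : Fin d → ℕ → α → ℝ} {ω : α}

def jumpSet (Tj : Fin d → ℕ → α → ℝ) (ω : α) : Set ℝ :=
  {t | ∃ j : Fin d, ∃ m : ℕ, 1 ≤ m ∧ Tj j m ω = t}

@[simp] lemma merged_zero : merged Tj 0 ω = 0 := rfl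

lemma isLeast_merged_succ (hfin : ∀ M, (jumpSet Tj ω ∩ Iic M).Finite)
    (hunb : ∀ M, ∃ t ∈ jumpSet Tj ω, M < t) (p : ℕ) :
    IsLeast {t | merged Tj p ω < t ∧ t ∈ jumpSet Tj ω} (merged Tj (p + 1) ω) := by
  set S := {t | merged Tj p ω < t ∧ t ∈ jumpSet Tj ω}
  obtain ⟨t₀, ht₀, hpt₀⟩ := hunb (merged Tj p ω)
  obtain ⟨x, hx, hmin⟩ := Set.exists_min_image (S ∩ Iic t₀) id
    ((hfin t₀).subset fun _ ht => ⟨ht.1.2, ht.2⟩) ⟨t₀, ⟨hpt₀, ht₀⟩, mem_Iic.2 le_rfl⟩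
  have hleast : IsLeast S x := ⟨hx.1, fun y hy => (le_or_gt y t₀).elim
    (fun hyt => hmin y ⟨hy, hyt⟩) (fun hyt => (mem_Iic.1 hx.2).trans hyt.le)⟩
  change IsLeast S (sInf S)
  rwa [hleast.csInf_eq]

lemma merged_strictMono (hfin : ∀ M, (jumpSet Tj ω ∩ Iic M).Finite)
    (hunb : ∀ M, ∃ t ∈ jumpSet Tj ω, M < t) : StrictMono fun p => merged Tj p ω :=
  strictMono_nat_of_lt_succ fun p => (isLeast_merged_succ hfin hunb p).1.1

lemma exists_lt_merged (hfin : ∀ M, (jumpSet Tj ω ∩ Iic M).Finite)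
    (hunb : ∀ M, ∃ t ∈ jumpSet Tj ω, M < t) (M : ℝ) : ∃ p, M < merged Tj p ω := by
  by_contra! hbdd
  refine Set.infinite_of_injective_forall_mem
    ((merged_strictMono hfin hunb).injective.comp (add_left_injective 1))
    (fun p => show merged Tj (p + 1) ω ∈ jumpSet Tj ω ∩ Iic M from
      ⟨(isLeast_merged_succ hfin hunb p).1.2, hbdd (p + 1)⟩) (hfin M)

lemma exists_merged_eq (hfin : ∀ M, (jumpSet Tj ω ∩ Iic M).Finite)
    (hunb : ∀ M, ∃ t ∈ jumpSet Tj ω, M < t) {u : ℝ} (hu : u ∈ jumpSet Tj ω) (hu₀ : 0 < u) :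
    ∃ p, merged Tj p ω = u := by
  have hex : ∃ p, u ≤ merged Tj p ω :=
    (exists_lt_merged hfin hunb u).imp fun _ => le_of_lt
  obtain ⟨k, hk⟩ : ∃ k, Nat.find hex = k + 1 :=
    Nat.exists_eq_succ_of_ne_zero fun h => (Nat.find_spec hex).not_gt (by simpa [h] using hu₀)
  have hku : merged Tj k ω < u := lt_of_not_ge (Nat.find_min hex (hk ▸ k.lt_succ_self))
  exact ⟨k + 1, le_antisymm ((isLeast_merged_succ hfin hunb k).2 ⟨hku, hu⟩)
    (hk ▸ Nat.find_spec hex)⟩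

end Merged

lemma oscillates_of_frequently_lt_abs_sub {f : ℝ → ℝ} {ε : ℝ}
    (hf : ∃ᶠ i : ℕ in atTop, 2 * ε < |f ((i : ℝ) + 1) - f i|) : Oscillates ε f := by
  intro a _
  obtain ⟨i, hai, hi⟩ := frequently_atTop.1 hf (⌈a⌉₊ + 1)
  have hai : a < i := (Nat.le_ceil a).trans_lt (by exact_mod_cast hai)
  by_contra! hnear
  have := abs_sub_le (f ((i : ℝ) + 1)) (f a) (f i)
  linarith [hnear _ (hai.trans (lt_add_one _)), hnear _ hai, abs_sub_comm (f a) (f i)]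

section GoodEvent

variable {α : Type} {d : ℕ} {B : Fin d → ℝ → α → ℝ} {ε : ℝ} {ω : α}

def goodEvent (B : Fin d → ℝ → α → ℝ) (ε : ℝ) : Set α :=
  {ω | ∀ j, (Continuous fun t => B j t ω) ∧ Oscillates ε fun t => B j t ω}

lemma finite_jumpSet_hitT_inter_Iic (hε : 0 < ε) (hω : ω ∈ goodEvent B ε) (M : ℝ) :
    (jumpSet (fun j => hitT (B j) ε) ω ∩ Iic M).Finite := by
  refine (finite_iUnion fun j => ((finite_setOf_hitT_le (hω j).1 (hω j).2 hε M).image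
    fun m => hitT (B j) ε m ω)).subset ?_
  rintro _ ⟨⟨j, m, -, rfl⟩, hM⟩
  exact mem_iUnion.2 ⟨j, m, hM, rfl⟩

lemma exists_mem_jumpSet_hitT_gt (hd : 0 < d) (hε : 0 < ε) (hω : ω ∈ goodEvent B ε)
    (M : ℝ) : ∃ t ∈ jumpSet (fun j => hitT (B j) ε) ω, M < t := by
  obtain ⟨m, hm⟩ := exists_lt_hitT (hω ⟨0, hd⟩).1 (hω ⟨0, hd⟩).2 hε M
  exact ⟨_, ⟨⟨0, hd⟩, m + 1, Nat.le_add_left 1 m, rfl⟩,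
    hm.trans (hitT_succ_mem (hω ⟨0, hd⟩).1 (hω ⟨0, hd⟩).2 hε m).1⟩

lemma mT_strictMono (hd : 0 < d) (hε : 0 < ε) (hω : ω ∈ goodEvent B ε) :
    StrictMono fun p => mT B ε p ω :=
  merged_strictMono (finite_jumpSet_hitT_inter_Iic hε hω) (exists_mem_jumpSet_hitT_gt hd hε hω)

lemma exists_lt_mT (hd : 0 < d) (hε : 0 < ε) (hω : ω ∈ goodEvent B ε) (M : ℝ) :
    ∃ p, M < mT B ε p ω :=
  exists_lt_merged (finite_jumpSet_hitT_inter_Iic hε hω) (exists_mem_jumpSet_hitT_gt hd hε hω) M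

lemma mT_succ_mem_jumpSet (hd : 0 < d) (hε : 0 < ε) (hω : ω ∈ goodEvent B ε) (p : ℕ) :
    mT B ε (p + 1) ω ∈ jumpSet (fun j => hitT (B j) ε) ω :=
  (isLeast_merged_succ (finite_jumpSet_hitT_inter_Iic hε hω)
    (exists_mem_jumpSet_hitT_gt hd hε hω) p).1.2

lemma exists_mT_eq (hd : 0 < d) (hε : 0 < ε) (hω : ω ∈ goodEvent B ε) {u : ℝ}
    (hu : u ∈ jumpSet (fun j => hitT (B j) ε) ω) : ∃ p, mT B ε p ω = u := by
  refine exists_merged_eq (finite_jumpSet_hitT_inter_Iic hε hω)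
    (exists_mem_jumpSet_hitT_gt hd hε hω) hu ?_
  obtain ⟨j, m, hm, rfl⟩ := hu
  exact hitT_zero (b := B j) (ω := ω) ▸ hitT_strictMono (hω j).1 (hω j).2 hε hm

end GoodEvent

section AlmostSure

variable {P : Measure Ω} [IsProbabilityMeasure P]

/-- Second Borel–Cantelli lemma for the independent Gaussian unit increments. -/
lemma ae_frequently_lt_abs_sub {b : ℝ → Ω → ℝ} (hb : IsBM P b) (c : ℝ) :
    ∀ᵐ ω ∂P, ∃ᶠ i : ℕ in atTop, c < |b ((i : ℝ) + 1) ω - b i ω| := by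
  set X : ℕ → Ω → ℝ := fun i ω => b ((i + 1 : ℕ) : ℝ) ω - b (i : ℝ) ω
  set E : Set ℝ := {x | c < |x|}
  have hE : MeasurableSet E := measurableSet_lt measurable_const measurable_abs
  have hX : ∀ i, Measurable (X i) := fun i => (hb.meas _).sub (hb.meas _)
  have hind : iIndepFun X P := hb.indep (fun i => i) Nat.mono_cast fun i => i.cast_nonneg
  have hlaw : ∀ i, P (X i ⁻¹' E) = gaussianReal 0 1 E := fun i => by
    rw [← Measure.map_apply (hX i) hE, hb.gauss _ _ i.cast_nonneg (by simp)]
    norm_num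
  have hpos : gaussianReal 0 1 E ≠ 0 := fun h0 => by
    have := gaussianReal_absolutelyContinuous' 0 one_ne_zero
      (measure_mono_null (fun x (hx : x ∈ Ioi |c|) => (le_abs_self c).trans_lt
        (hx.trans_le (le_abs_self x))) h0)
    simp at this
  have hlimsup := measure_limsup_eq_one (fun i => (hX i) hE)
    ((iIndepSet_iff_meas_biInter fun i => (hX i) hE).2 fun S =>
      hind.measure_inter_preimage_eq_mul S fun _ _ => hE)
    (by simp_rw [hlaw]; exact ENNReal.tsum_const_eq_top_of_ne_zero hpos)
  have hae : ∀ᵐ ω ∂P, ω ∈ limsup (fun i => X i ⁻¹' E) atTop := ae_iff.2 <|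
    (prob_compl_eq_zero_iff (MeasurableSet.measurableSet_limsup fun i => (hX i) hE)).2 hlimsup
  filter_upwards [hae] with ω hω
  simpa [X, E] using mem_limsup_iff_frequently_mem.1 hω

lemma ae_mem_goodEvent {d : ℕ} {B : Fin d → ℝ → Ω → ℝ} (hB : IsBMd P B) (ε : ℝ) :
    ∀ᵐ ω ∂P, ω ∈ goodEvent B ε := by
  refine ae_all_iff.2 fun j => ?_
  filter_upwards [(hB.coord j).cont, ae_frequently_lt_abs_sub (hB.coord j) (2 * ε)] with ω hc hf
  exact ⟨hc, oscillates_of_frequently_lt_abs_sub hf⟩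

end AlmostSure

lemma exists_le_lt_succ {a : ℕ → ℝ} {x : ℝ} (h₀ : a 0 ≤ x) (hx : ∃ p, x < a p) :
    ∃ ℓ, a ℓ ≤ x ∧ x < a (ℓ + 1) := by
  obtain ⟨ℓ, hℓ⟩ : ∃ ℓ, Nat.find hx = ℓ + 1 :=
    Nat.exists_eq_succ_of_ne_zero fun h => (h ▸ Nat.find_spec hx).not_ge h₀
  exact ⟨ℓ, not_lt.1 (Nat.find_min hx (hℓ ▸ ℓ.lt_succ_self)), hℓ ▸ Nat.find_spec hx⟩

section FirstJumpAfter

variable {α : Type} {d : ℕ} {B : Fin d → ℝ → α → ℝ} {ε : ℝ} {τ : α → ℝ} {ω : α} {ℓ : ℕ}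

lemma qtime_eq (hmono : StrictMono fun p => mT B ε p ω)
    (hℓ : mT B ε ℓ ω ≤ τ ω ∧ τ ω < mT B ε (ℓ + 1) ω) :
    Qtime B ε τ ω = mT B ε (ℓ + 1) ω := by
  refine IsLeast.csInf_eq ⟨⟨⟨ℓ + 1, rfl⟩, hℓ.2⟩, ?_⟩
  rintro _ ⟨⟨p, rfl⟩, hτp⟩
  exact hmono.monotone (hmono.lt_iff_lt.1 (hℓ.1.trans_lt hτp))

lemma etaTime_eq (hmono : StrictMono fun p => mT B ε p ω)
    (hℓ : mT B ε ℓ ω ≤ τ ω ∧ τ ω < mT B ε (ℓ + 1) ω) {n r : ℕ} (hnℓ : n ≤ ℓ) (hℓr : ℓ ≤ r) :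
    etaTime B ε τ n r ω = mT B ε ℓ ω := by
  rw [etaTime, Finset.sum_eq_single_of_mem (ℓ + 1) (Finset.mem_Icc.2 ⟨by omega, by omega⟩)]
  · simp [qtime_eq hmono hℓ]
  · intro k _ hk
    rw [qtime_eq hmono hℓ, if_neg (hk ∘ hmono.injective.eq_iff.1 ∘ Eq.symm)]

lemma qtime_le_iff (hd : 0 < d) (hε : 0 < ε) (hω : ω ∈ goodEvent B ε) (hτ₀ : 0 ≤ τ ω)
    (t : ℝ) : Qtime B ε τ ω ≤ t ↔
      ∃ u ∈ jumpSet (fun j => hitT (B j) ε) ω, τ ω < u ∧ u ≤ t := by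
  have hmono := mT_strictMono hd hε hω
  obtain ⟨ℓ, hℓ⟩ := exists_le_lt_succ hτ₀ (exists_lt_mT hd hε hω (τ ω))
  rw [qtime_eq hmono hℓ]
  refine ⟨fun ht => ⟨_, mT_succ_mem_jumpSet hd hε hω ℓ, hℓ.2, ht⟩, ?_⟩
  rintro ⟨u, hu, hτu, hut⟩
  obtain ⟨p, rfl⟩ := exists_mT_eq hd hε hω hu
  exact (hmono.monotone (hmono.lt_iff_lt.1 (hℓ.1.trans_lt hτu))).trans hut

lemma exists_etaTime_eq (hd : 0 < d) (hε : 0 < ε) (hω : ω ∈ goodEvent B ε) {n r : ℕ}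
    (hn : mT B ε n ω ≤ τ ω) (hr : τ ω ≤ mT B ε r ω) :
    ∃ ℓ, n ≤ ℓ ∧ ℓ ≤ r ∧ (mT B ε ℓ ω ≤ τ ω ∧ τ ω < mT B ε (ℓ + 1) ω) ∧
      etaTime B ε τ n r ω = mT B ε ℓ ω := by
  have hmono := mT_strictMono hd hε hω
  obtain ⟨ℓ, hℓ⟩ := exists_le_lt_succ ((hmono.monotone n.zero_le).trans hn)
    (exists_lt_mT hd hε hω (τ ω))
  have hnℓ : n ≤ ℓ := Nat.lt_succ_iff.1 (hmono.lt_iff_lt.1 (hn.trans_lt hℓ.2))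
  have hℓr : ℓ ≤ r := hmono.le_iff_le.1 (hℓ.1.trans hr)
  exact ⟨ℓ, hnℓ, hℓr, hℓ, etaTime_eq hmono hℓ hnℓ hℓr⟩

end FirstJumpAfter

lemma IsPureJump.apply_min_eq {α : Type} {d : ℕ} {B : Fin d → ℝ → α → ℝ} {ε : ℝ}
    {Z : ℝ → α → ℝ} (hZ : IsPureJump B ε Z) {ω : α} {ℓ : ℕ} {x : ℝ}
    (hx : mT B ε ℓ ω ≤ x ∧ x < mT B ε (ℓ + 1) ω) (T : ℝ) :
    Z (min x T) ω = Z (min (mT B ε ℓ ω) T) ω := by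
  rcases le_total T (mT B ε ℓ ω) with hT | hT
  · rw [min_eq_right hT, min_eq_right (hT.trans hx.1)]
  · rw [min_eq_left hT]
    exact hZ.2 ω _ ℓ (le_min hx.1 hT) ((min_le_left _ _).trans_lt hx.2)

section StoppingTimes

variable {d : ℕ} {P : Measure Ω} [IsProbabilityMeasure P] {B : Fin d → ℝ → Ω → ℝ} {ε : ℝ}

lemma isStopTime_hitT (hB : IsBMd P B) (hε : 0 < ε) (j : Fin d) :
    ∀ m, IsStopTime (augFilt P B) (hitT (B j) ε m)
  | 0 => fun s => by simpa only [hitT_zero] using MeasurableSet.const (0 ≤ s)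
  | m + 1 => fun s => by
    have hm := isStopTime_hitT hB hε j m
    set E := ⋂ (δ : ℚ) (_ : 0 < δ), ⋃ (q : ℚ) (q' : ℚ) (_ : (q : ℝ) < q' ∧ (q' : ℝ) ≤ s),
      {ω | hitT (B j) ε m ω ≤ q} ∩ {ω | hitT (B j) ε m ω ≤ q - δ}ᶜ ∩
        {ω | ε - δ ≤ |B j q' ω - B j q ω|}
    have hE : MeasurableSet[augFilt P B s] E := by
      refine .iInter fun δ => .iInter fun hδ => .iUnion fun q => .iUnion fun q' => .iUnion
        fun ⟨hqq', hq's⟩ => ((augFilt_mono P B (hqq'.le.trans hq's) _ (hm q)).inter ?_).inter ?_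
      · exact (augFilt_mono P B (by linarith [(Rat.cast_pos.2 hδ : (0 : ℝ) < δ)]) _ (hm _)).compl
      · have hinc : Measurable[augFilt P B s] fun ω => |B j q' ω - B j q ω| :=
          continuous_abs.measurable.comp
            ((measurable_augFilt hq's j).sub (measurable_augFilt (hqq'.le.trans hq's) j))
        exact hinc measurableSet_Ici
    refine measurableSet_augFilt_of_ae_eq hE ?_
    filter_upwards [ae_mem_goodEvent hB ε] with ω hω
    refine propext ?_
    change ω ∈ E ↔ hitT (B j) ε (m + 1) ω ≤ s
    rw [hitT_succ_le_iff (hω j).1 (hω j).2 hε, exists_le_abs_sub_iff_forall_rat (hω j).1 hε]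
    simp [E, not_le]

lemma isStopTime_qtime (hd : 0 < d) (hB : IsBMd P B) (hε : 0 < ε) {τ : Ω → ℝ}
    (hτ : IsStopTime (augFilt P B) τ) (hτ₀ : ∀ᵐ ω ∂P, 0 ≤ τ ω) :
    IsStopTime (augFilt P B) (Qtime B ε τ) := by
  intro t
  set E := ⋃ (j : Fin d) (m : ℕ) (_ : 1 ≤ m), {ω | τ ω < hitT (B j) ε m ω ∧ hitT (B j) ε m ω ≤ t}
  have hE : MeasurableSet[augFilt P B t] E := .iUnion fun j => .iUnion fun m => .iUnion fun _ =>
    hτ.measurableSet_lt_and_le (augFilt_mono P B) (isStopTime_hitT hB hε j m) t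
  refine measurableSet_augFilt_of_ae_eq hE ?_
  filter_upwards [ae_mem_goodEvent hB ε, hτ₀] with ω hω hτω
  refine propext ?_
  change ω ∈ E ↔ Qtime B ε τ ω ≤ t
  rw [qtime_le_iff hd hε hω hτω]
  simp only [E, jumpSet, mem_iUnion, exists_prop, mem_ofPred_eq]
  constructor
  · rintro ⟨j, m, hm, hτm, hmt⟩
    exact ⟨_, ⟨j, m, hm, rfl⟩, hτm, hmt⟩
  · rintro ⟨_, ⟨j, m, hm, rfl⟩, hτm, hmt⟩
    exact ⟨j, m, hm, hτm, hmt⟩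

end StoppingTimes

theorem discretization_of_stopping_times_general
    {d : ℕ} (hd : 0 < d) (P : Measure Ω) [IsProbabilityMeasure P]
    (B : Fin d → ℝ → Ω → ℝ) (hB : IsBMd P B) (ε : ℝ) (hε : 0 < ε)
    (T : ℝ) (Zk : ℝ → Ω → ℝ) (hZk : IsPureJump B ε Zk)
    (n r : ℕ) (τ : Ω → ℝ) (hτ : IsStopTime (augFilt P B) τ)
    (hτrange : ∀ᵐ ω ∂P, mT B ε n ω ≤ τ ω ∧ τ ω ≤ mT B ε r ω) :
    IsStopTime (augFilt P B) (Qtime B ε τ) ∧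
    (1 ≤ n → P {ω | etaTime B ε τ n r ω = mT B ε (n - 1) ω} = 0) ∧
    (∀ᵐ ω ∂P, ∃ ℓ : ℕ, n ≤ ℓ ∧ ℓ ≤ r ∧ etaTime B ε τ n r ω = mT B ε ℓ ω) ∧
    (∀ᵐ ω ∂P, Zk (min (τ ω) T) ω = Zk (min (etaTime B ε τ n r ω) T) ω) := by
  have hgood := ae_mem_goodEvent hB ε
  have hη : ∀ᵐ ω ∂P, ∃ ℓ, n ≤ ℓ ∧ ℓ ≤ r ∧ (mT B ε ℓ ω ≤ τ ω ∧ τ ω < mT B ε (ℓ + 1) ω) ∧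
      etaTime B ε τ n r ω = mT B ε ℓ ω := by
    filter_upwards [hgood, hτrange] with ω hω hτω
    exact exists_etaTime_eq hd hε hω hτω.1 hτω.2
  refine ⟨isStopTime_qtime hd hB hε hτ ?_, fun hn => ?_, ?_, ?_⟩
  · filter_upwards [hgood, hτrange] with ω hω hτω
    exact ((mT_strictMono hd hε hω).monotone n.zero_le).trans hτω.1
  · have hne : ∀ᵐ ω ∂P, etaTime B ε τ n r ω ≠ mT B ε (n - 1) ω := by
      filter_upwards [hgood, hη] with ω hω hωη
      obtain ⟨ℓ, hnℓ, -, -, hηℓ⟩ := hωη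
      exact hηℓ ▸ (mT_strictMono hd hε hω).injective.ne (by omega)
    simpa using ae_iff.1 hne
  · filter_upwards [hη] with ω ⟨ℓ, hnℓ, hℓr, _, hηℓ⟩
    exact ⟨ℓ, hnℓ, hℓr, hηℓ⟩
  · filter_upwards [hη] with ω ⟨ℓ, _, _, hℓ, hηℓ⟩
    rw [hηℓ]
    exact hZk.apply_min_eq hℓ T

/-- For a Brownian stopping time `τ` with `T^k_n ≤ τ ≤ T^k_r` a.s., the
time `Q(τ)` is a Brownian stopping time, `η(τ)` a.s. avoids `T^k_{n−1}` and takes values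
in `{T^k_n, …, T^k_r}`, and `Z^k(τ ∧ T) = Z^k(η(τ) ∧ T)` almost surely. -/
theorem discretization_of_stopping_times
    {d : ℕ} (hd : 0 < d) (P : Measure Ω) [IsProbabilityMeasure P]
    (B : Fin d → ℝ → Ω → ℝ) (hB : IsBMd P B) (ε : ℝ) (hε : 0 < ε)
    (T : ℝ) (hT : 0 < T) (Zk : ℝ → Ω → ℝ) (hZk : IsPureJump B ε Zk)
    (n r : ℕ) (hnr : n ≤ r) (τ : Ω → ℝ) (hτ : IsStopTime (augFilt P B) τ)
    (hτrange : ∀ᵐ ω ∂P, mT B ε n ω ≤ τ ω ∧ τ ω ≤ mT B ε r ω) :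
    IsStopTime (augFilt P B) (Qtime B ε τ) ∧
    (1 ≤ n → P {ω | etaTime B ε τ n r ω = mT B ε (n - 1) ω} = 0) ∧
    (∀ᵐ ω ∂P, ∃ ℓ : ℕ, n ≤ ℓ ∧ ℓ ≤ r ∧ etaTime B ε τ n r ω = mT B ε ℓ ω) ∧
    (∀ᵐ ω ∂P, Zk (min (τ ω) T) ω = Zk (min (etaTime B ε τ n r ω) T) ω) :=
  discretization_of_stopping_times_general hd P B hB ε hε T Zk hZk n r τ hτ hτrange
end
end

section
/- Let 1/2 < H < 1 and T > 0. There exists a constant C depending only on H and T such that |ρ_H(t,s)| ≤ C ( ρ_{H,1}(t,s) + ρ_{H,2}(t,s) ) for all 0 < s < t ≤ T, where ρ_{H,1}(t,s) := t^{H−1/2} s^{1/2−H} (t−s)^{H−3/2} and ρ_{H,2}(t,s) := s^{−H−1/2} ∫_s^t u^{H−3/2} (u−s)^{H−1/2} du. -/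
/-!
Substituting `u = s v` gives `K_H(t,s) = d_H s^{H-1/2} G(t/s)` with
`G(y) = ∫_1^y v^{H-1/2} (v-1)^{H-3/2} dv`, so `ρ_H` is computed by the chain rule and the
fundamental theorem of calculus, without differentiating under the integral sign. Integrating
by parts in `G` (against `d/dv (v-1)^{H-1/2}`) and undoing the substitution yields the exact
identity `ρ_H = -d_H (ρ_{H,1} + (H - 1/2) ρ_{H,2})`; as `0 < H - 1/2 < 1`, the bound holds
with `C = d_H`.
-/

open MeasureTheory Set
open scoped Topology

noncomputable section

/-- The usual normalizing constant `d_H` of the Volterra kernel representation of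
fractional Brownian motion. -/
def dConst (H : ℝ) : ℝ :=
  Real.sqrt (2 * H * Real.Gamma (3 / 2 - H) /
    (Real.Gamma (H + 1 / 2) * Real.Gamma (2 - 2 * H)))

/-- The Volterra kernel `K_H(t,s) = d_H s^{1/2−H} ∫_s^t u^{H−1/2}(u−s)^{H−3/2} du`. -/
def KH (H : ℝ) (t s : ℝ) : ℝ :=
  dConst H * s ^ ((1 : ℝ) / 2 - H) *
    ∫ u in s..t, u ^ (H - 1 / 2) * (u - s) ^ (H - 3 / 2)

/-- `ρ_H(t,s) = ∂_s K_H(t,s)`. -/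
def rhoH (H : ℝ) (t s : ℝ) : ℝ := deriv (fun r => KH H t r) s

theorem intervalIntegrable_sub_one_rpow {b y : ℝ} (hb : -1 < b) :
    IntervalIntegrable (fun v : ℝ => (v - 1) ^ b) volume 1 y := by
  simpa using
    (intervalIntegral.intervalIntegrable_rpow' (a := 0) (b := y - 1) hb).comp_sub_right 1

theorem intervalIntegrable_rpow_mul_sub_one_rpow {a b y : ℝ} (hb : -1 < b) (hy : 0 < y) :
    IntervalIntegrable (fun v : ℝ => v ^ a * (v - 1) ^ b) volume 1 y :=
  (intervalIntegrable_sub_one_rpow hb).continuousOn_mul <|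
    ContinuousOn.rpow_const continuousOn_id fun _ hv =>
      Or.inl ((lt_min one_pos hy).trans_le hv.1).ne'

theorem hasDerivAt_integral_rpow_mul_sub_one_rpow {a b y : ℝ} (hb : -1 < b) (hy : 1 < y) :
    HasDerivAt (fun z => ∫ v in (1 : ℝ)..z, v ^ a * (v - 1) ^ b) (y ^ a * (y - 1) ^ b) y := by
  have hcont : ContinuousAt (fun v : ℝ => v ^ a * (v - 1) ^ b) y :=
    (continuousAt_id.rpow_const (Or.inl (one_pos.trans hy).ne')).mul
      ((continuousAt_id.sub continuousAt_const).rpow_const (Or.inl (sub_pos.2 hy).ne'))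
  exact intervalIntegral.integral_hasDerivAt_right
    (intervalIntegrable_rpow_mul_sub_one_rpow hb (by linarith))
    ((by fun_prop : Measurable fun v : ℝ => v ^ a * (v - 1) ^ b).stronglyMeasurable
      |>.stronglyMeasurableAtFilter)
    hcont

theorem integral_rpow_mul_sub_one_rpow_by_parts {a c y : ℝ} (hc : 0 < c) (hy : 1 ≤ y) :
    c * ∫ v in (1 : ℝ)..y, v ^ a * (v - 1) ^ (c - 1) =
      y ^ a * (y - 1) ^ c - a * ∫ v in (1 : ℝ)..y, v ^ (a - 1) * (v - 1) ^ c := by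
  have hne : ∀ v ∈ uIcc 1 y, v ≠ 0 := fun v hv =>
    ((lt_min one_pos (by linarith)).trans_le hv.1).ne'
  have key := intervalIntegral.integral_mul_deriv_eq_deriv_mul_of_hasDerivAt
    (u := fun v : ℝ => v ^ a) (v := fun v : ℝ => (v - 1) ^ c)
    (u' := fun v => a * v ^ (a - 1)) (v' := fun v => c * (v - 1) ^ (c - 1)) (a := 1) (b := y)
    (ContinuousOn.rpow_const continuousOn_id fun v hv => Or.inl (hne v hv))
    (ContinuousOn.rpow_const (continuousOn_id.sub continuousOn_const) fun _ _ => Or.inr hc.le)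
    (fun v hv => Real.hasDerivAt_rpow_const (Or.inl (hne v (Ioo_subset_Icc_self hv))))
    (fun v hv => by
      rw [min_eq_left hy] at hv
      simpa using ((hasDerivAt_id v).sub_const 1).rpow_const (p := c)
        (Or.inl (sub_pos.2 hv.1).ne'))
    (ContinuousOn.intervalIntegrable (continuousOn_const.mul
      (ContinuousOn.rpow_const continuousOn_id fun v hv => Or.inl (hne v hv))))
    ((intervalIntegrable_sub_one_rpow (by linarith)).const_mul c)
  simp only [sub_self, Real.zero_rpow hc.ne', mul_zero, sub_zero] at key
  rw [← intervalIntegral.integral_const_mul, ← intervalIntegral.integral_const_mul]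
  simpa only [mul_left_comm c, mul_assoc] using key

theorem integral_rpow_mul_sub_rpow_eq {a b s t : ℝ} (hs : 0 < s) (hst : s ≤ t) :
    ∫ u in s..t, u ^ a * (u - s) ^ b =
      s ^ (a + b + 1) * ∫ v in (1 : ℝ)..t / s, v ^ a * (v - 1) ^ b := by
  have hscale : ∀ u ∈ uIcc s t, u ^ a * (u - s) ^ b =
      s ^ (a + b) * ((u / s) ^ a * (u / s - 1) ^ b) := by
    intro u hu
    rw [uIcc_of_le hst] at hu
    have hsu : 0 ≤ u - s := sub_nonneg.2 hu.1
    rw [show u / s - 1 = (u - s) / s by field_simp, Real.div_rpow (hs.le.trans hu.1) hs.le,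
      Real.div_rpow hsu hs.le, Real.rpow_add hs]
    field_simp
  rw [intervalIntegral.integral_congr hscale, intervalIntegral.integral_const_mul,
    intervalIntegral.integral_comp_div (fun v => v ^ a * (v - 1) ^ b) hs.ne', div_self hs.ne',
    smul_eq_mul, ← mul_assoc, ← Real.rpow_add_one hs.ne']

def kernelProfile (H y : ℝ) : ℝ :=
  ∫ v in (1 : ℝ)..y, v ^ (H - 1 / 2) * (v - 1) ^ (H - 3 / 2)

def rhoH1 (H t s : ℝ) : ℝ := t ^ (H - 1 / 2) * s ^ ((1 : ℝ) / 2 - H) * (t - s) ^ (H - 3 / 2)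

def rhoH2 (H t s : ℝ) : ℝ :=
  s ^ (-H - 1 / 2) * ∫ u in s..t, u ^ (H - 3 / 2) * (u - s) ^ (H - 1 / 2)

theorem KH_eq_rpow_mul_kernelProfile {H t s : ℝ} (hs : 0 < s) (hst : s ≤ t) :
    KH H t s = dConst H * s ^ (H - 1 / 2) * kernelProfile H (t / s) := by
  rw [KH, integral_rpow_mul_sub_rpow_eq hs hst, kernelProfile, ← mul_assoc, mul_assoc (dConst H),
    ← Real.rpow_add hs]
  ring_nf

theorem rhoH1_eq {H t s : ℝ} (hs : 0 < s) (hst : s ≤ t) :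
    rhoH1 H t s = s ^ (H - 3 / 2) * ((t / s) ^ (H - 1 / 2) * (t / s - 1) ^ (H - 3 / 2)) := by
  rw [rhoH1, show t / s - 1 = (t - s) / s by field_simp, Real.div_rpow (hs.le.trans hst) hs.le,
    Real.div_rpow (sub_nonneg.2 hst) hs.le, show (1 : ℝ) / 2 - H = -(H - 1 / 2) by ring,
    Real.rpow_neg hs.le, show H - 3 / 2 = H - 1 / 2 - 1 by ring, Real.rpow_sub_one hs.ne']
  field_simp

theorem rhoH2_eq {H t s : ℝ} (hs : 0 < s) (hst : s ≤ t) :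
    rhoH2 H t s =
      s ^ (H - 3 / 2) * ∫ v in (1 : ℝ)..t / s, v ^ (H - 3 / 2) * (v - 1) ^ (H - 1 / 2) := by
  rw [rhoH2, integral_rpow_mul_sub_rpow_eq hs hst, ← mul_assoc, ← Real.rpow_add hs]
  ring_nf

theorem sub_half_mul_kernelProfile {H y : ℝ} (hH : 1 / 2 < H) (hy : 1 ≤ y) :
    (H - 1 / 2) * kernelProfile H y = y ^ (H - 1 / 2) * (y - 1) ^ (H - 1 / 2) -
      (H - 1 / 2) * ∫ v in (1 : ℝ)..y, v ^ (H - 3 / 2) * (v - 1) ^ (H - 1 / 2) := by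
  have h := integral_rpow_mul_sub_one_rpow_by_parts (a := H - 1 / 2) (sub_pos.2 hH) hy
  rwa [show H - 1 / 2 - 1 = H - 3 / 2 by ring] at h

theorem hasDerivAt_KH {H t s : ℝ} (hH : 1 / 2 < H) (hs : 0 < s) (hst : s < t) :
    HasDerivAt (fun r => KH H t r) (-dConst H * (rhoH1 H t s + (H - 1 / 2) * rhoH2 H t s)) s := by
  have hy : 1 < t / s := (one_lt_div hs).2 hst
  have hprofile : HasDerivAt (kernelProfile H)
      ((t / s) ^ (H - 1 / 2) * (t / s - 1) ^ (H - 3 / 2)) (t / s) :=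
    hasDerivAt_integral_rpow_mul_sub_one_rpow (by linarith) hy
  have hquot : HasDerivAt (fun r => t / r) (-(t / s ^ 2)) s := by
    simpa [div_eq_mul_inv] using (hasDerivAt_inv hs.ne').const_mul t
  have hK := ((Real.hasDerivAt_rpow_const (p := H - 1 / 2) (Or.inl hs.ne')).const_mul
    (dConst H)).mul (hprofile.comp s hquot)
  have hev : (fun r => KH H t r) =ᶠ[𝓝 s]
      fun r => dConst H * r ^ (H - 1 / 2) * kernelProfile H (t / r) := by
    filter_upwards [Ioo_mem_nhds hs hst] with r hr using
      KH_eq_rpow_mul_kernelProfile hr.1 hr.2.le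
  refine (hK.congr_of_eventuallyEq hev).congr_deriv ?_
  rw [rhoH1_eq hs hst.le, rhoH2_eq hs hst.le]
  have hibp := sub_half_mul_kernelProfile hH hy.le
  have hquot' : s ^ (H - 1 / 2) * (t / s ^ 2) = s ^ (H - 3 / 2) * (t / s) := by
    rw [show H - 1 / 2 = H - 3 / 2 + 1 by ring, Real.rpow_add_one hs.ne']
    field_simp
  have hy1 : (t / s - 1) ^ (H - 1 / 2) = (t / s - 1) ^ (H - 3 / 2) * (t / s - 1) := by
    rw [show H - 1 / 2 = H - 3 / 2 + 1 by ring, Real.rpow_add_one (sub_pos.2 hy).ne']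
  rw [Function.comp_apply, show H - 1 / 2 - 1 = H - 3 / 2 by ring]
  -- the chain-rule term cancels the boundary term of `hibp` up to `-ρ_{H,1}`
  linear_combination dConst H * s ^ (H - 3 / 2) * hibp
    - dConst H * ((t / s) ^ (H - 1 / 2) * (t / s - 1) ^ (H - 3 / 2)) * hquot'
    + dConst H * s ^ (H - 3 / 2) * (t / s) ^ (H - 1 / 2) * hy1

theorem rhoH_eq {H t s : ℝ} (hH : 1 / 2 < H) (hs : 0 < s) (hst : s < t) :
    rhoH H t s = -dConst H * (rhoH1 H t s + (H - 1 / 2) * rhoH2 H t s) :=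
  (hasDerivAt_KH hH hs hst).deriv

theorem rhoH1_nonneg {H t s : ℝ} (hs : 0 ≤ s) (hst : s ≤ t) : 0 ≤ rhoH1 H t s := by
  have : 0 ≤ t - s := sub_nonneg.2 hst
  have : 0 ≤ t := hs.trans hst
  unfold rhoH1
  positivity

theorem rhoH2_nonneg {H t s : ℝ} (hs : 0 ≤ s) (hst : s ≤ t) : 0 ≤ rhoH2 H t s :=
  mul_nonneg (Real.rpow_nonneg hs _) <| intervalIntegral.integral_nonneg hst fun _ hu =>
    mul_nonneg (Real.rpow_nonneg (hs.trans hu.1) _) (Real.rpow_nonneg (sub_nonneg.2 hu.1) _)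

theorem rhoH_kernel_bound_general (H T : ℝ) (hH1 : 1 / 2 < H) (hH2 : H < 1) :
    ∃ C : ℝ, 0 ≤ C ∧ ∀ s t : ℝ, 0 < s → s < t → t ≤ T →
      |rhoH H t s| ≤
        C * (t ^ (H - 1 / 2) * s ^ ((1 : ℝ) / 2 - H) * (t - s) ^ (H - 3 / 2) +
          s ^ (-H - 1 / 2) * ∫ u in s..t, u ^ (H - 3 / 2) * (u - s) ^ (H - 1 / 2)) := by
  have hd : 0 ≤ dConst H := Real.sqrt_nonneg _
  refine ⟨dConst H, hd, fun s t hs hst _ => ?_⟩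
  have h1 := rhoH1_nonneg (H := H) hs.le hst.le
  have h2 := rhoH2_nonneg (H := H) hs.le hst.le
  calc |rhoH H t s| = dConst H * (rhoH1 H t s + (H - 1 / 2) * rhoH2 H t s) := by
        rw [rhoH_eq hH1 hs hst, abs_mul, abs_neg, abs_of_nonneg hd,
          abs_of_nonneg (by nlinarith)]
    _ ≤ dConst H * (rhoH1 H t s + rhoH2 H t s) := by gcongr; nlinarith

/-- For `1/2 < H < 1` and `T > 0` there is a constant `C`, depending
only on `H` and `T`, such that `|ρ_H(t,s)| ≤ C (ρ_{H,1}(t,s) + ρ_{H,2}(t,s))` for all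
`0 < s < t ≤ T`, where `ρ_{H,1}(t,s) = t^{H−1/2} s^{1/2−H} (t−s)^{H−3/2}` and
`ρ_{H,2}(t,s) = s^{−H−1/2} ∫_s^t u^{H−3/2}(u−s)^{H−1/2} du`. -/
theorem rhoH_kernel_bound (H T : ℝ) (hH1 : 1 / 2 < H) (hH2 : H < 1) (hT : 0 < T) :
    ∃ C : ℝ, 0 ≤ C ∧ ∀ s t : ℝ, 0 < s → s < t → t ≤ T →
      |rhoH H t s| ≤
        C * (t ^ (H - 1 / 2) * s ^ ((1 : ℝ) / 2 - H) * (t - s) ^ (H - 3 / 2) +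
          s ^ (-H - 1 / 2) * ∫ u in s..t, u ^ (H - 3 / 2) * (u - s) ^ (H - 1 / 2)) :=
  rhoH_kernel_bound_general H T hH1 hH2
end
end
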